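/- In the partially linear model with two independent observations D_j, D_l with the common distribution, the (non-orthogonalized) R-SMD first-order condition holds at the truth: E[k(Z_j − Z_l) · P̃_j · (ỹ_l − ⟨P̃_l, θ₀⟩)] = 0 ∈ ℝ^p. Moreover, if the p×p matrix B := E[k(Z_j − Z_l) P̃_j P̃_lᵀ] is invertible, then θ₀ = B⁻¹ · E[k(Z_j − Z_l) P̃_j ỹ_l]. -/

import Mathlib

open MeasureTheory ProbabilityTheory Filter Topology Complex Matrix NNReal ENNReal

/-!
Partialling out `X` leaves `ỹ = ⟨P̃, θ₀⟩ + ε`, so the residual `ỹ_l - ⟨P̃_l, θ₀⟩` is `ε_l`, which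
is orthogonal to every bounded function of `(X_l, Z_l)`, in particular to `k (z - Z_l)` for each
fixed `z`. Independence of the two observations lets one integrate first over observation `l`
with `(Z_j, P̃_j)` frozen (Fubini on the product of the two laws), so the moment vanishes. The
second claim is the first one read as the linear system `B θ₀ = E[k(Z_j - Z_l) P̃_j ỹ_l]`.
-/

section FourierTransform

variable {n : Type*} [Fintype n] {μ : Measure (n → ℝ)} {k : (n → ℝ) → ℝ}

theorem measurable_of_ofReal_eq_integral_cexp [SFinite μ]
    (hk : ∀ u, (k u : ℂ) = ∫ t, Complex.exp (Complex.I * ((t ⬝ᵥ u : ℝ) : ℂ)) ∂μ) :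
    Measurable k := by
  have hcont : Continuous fun q : (n → ℝ) × (n → ℝ) =>
      Complex.exp (Complex.I * ((q.2 ⬝ᵥ q.1 : ℝ) : ℂ)) := by
    unfold dotProduct; fun_prop
  have hk_re : k = fun u => (∫ t, Complex.exp (Complex.I * ((t ⬝ᵥ u : ℝ) : ℂ)) ∂μ).re := by
    funext u; rw [← hk u, Complex.ofReal_re]
  rw [hk_re]
  exact Complex.measurable_re.comp hcont.stronglyMeasurable.integral_prod_right'.measurable

theorem abs_le_of_ofReal_eq_integral_cexp [IsFiniteMeasure μ]
    (hk : ∀ u, (k u : ℂ) = ∫ t, Complex.exp (Complex.I * ((t ⬝ᵥ u : ℝ) : ℂ)) ∂μ) (u : n → ℝ) :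
    |k u| ≤ μ.real Set.univ := by
  have h : ‖(k u : ℂ)‖ ≤ 1 * μ.real Set.univ := by
    rw [hk u]
    refine norm_integral_le_of_norm_le_const (ae_of_all _ fun t => ?_)
    rw [Complex.norm_exp_I_mul_ofReal]
  simpa using h

end FourierTransform

section ConditionalExpectation

variable {Ω ι : Type*} [Fintype ι] {m mΩ : MeasurableSpace Ω} {P : Measure Ω}

theorem condExp_ae_eq_zero_of_le [IsFiniteMeasure P] {m' : MeasurableSpace Ω} (hm' : m' ≤ m)
    (hm : m ≤ mΩ) {e : Ω → ℝ} (he : P[e|m] =ᵐ[P] 0) : P[e|m'] =ᵐ[P] 0 :=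
  calc P[e|m'] =ᵐ[P] P[P[e|m]|m'] := (condExp_condExp_of_le hm' hm).symm
    _ =ᵐ[P] P[(0 : Ω → ℝ)|m'] := condExp_congr_ae he
    _ = 0 := condExp_zero

theorem integral_mul_eq_zero_of_condExp_ae_eq_zero [IsFiniteMeasure P] (hm : m ≤ mΩ) {φ e : Ω → ℝ}
    (hφ : StronglyMeasurable[m] φ) {C : ℝ} (hφC : ∀ ω, |φ ω| ≤ C)
    (he : Integrable e P) (he_cond : P[e|m] =ᵐ[P] 0) :
    ∫ ω, φ ω * e ω ∂P = 0 := by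
  have hφe : Integrable (φ * e) P := he.bdd_mul (hφ.mono hm).aestronglyMeasurable (ae_of_all _ hφC)
  calc ∫ ω, φ ω * e ω ∂P = ∫ ω, P[φ * e|m] ω ∂P := (integral_condExp hm).symm
    _ = ∫ ω, φ ω * P[e|m] ω ∂P :=
        integral_congr_ae (condExp_mul_of_stronglyMeasurable_left hφ hφe he)
    _ = 0 := by
        rw [integral_congr_ae (he_cond.mono fun ω hω => by rw [hω, Pi.zero_apply, mul_zero])]
        simp

theorem condExp_dotProduct_ae_eq {Q G : Ω → ι → ℝ}
    (hQ : Integrable Q P) (hG : G =ᵐ[P] P[Q|m]) (θ : ι → ℝ) :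
    P[fun ω => Q ω ⬝ᵥ θ|m] =ᵐ[P] fun ω => G ω ⬝ᵥ θ := by
  let L : (ι → ℝ) →L[ℝ] ℝ := LinearMap.toContinuousLinearMap ((dotProductBilin ℝ ℝ).flip θ)
  have hL : (fun ω => P[Q|m] ω ⬝ᵥ θ) =ᵐ[P] P[fun ω => Q ω ⬝ᵥ θ|m] := L.comp_condExp_comm hQ
  filter_upwards [hL, hG] with ω hω hGω
  rw [← hω, hGω]

theorem residual_ae_eq_of_partiallyLinear [IsFiniteMeasure P] (hm : m ≤ mΩ)
    {y h ε Gy : Ω → ℝ} {Q GQ : Ω → ι → ℝ} {θ : ι → ℝ}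
    (hh : StronglyMeasurable[m] h) (hmodel : ∀ ω, y ω = Q ω ⬝ᵥ θ + h ω + ε ω)
    (hy : Integrable y P) (hQ : Integrable Q P) (hε : Integrable ε P)
    (hε_cond : P[ε|m] =ᵐ[P] 0) (hGy : Gy =ᵐ[P] P[y|m]) (hGQ : GQ =ᵐ[P] P[Q|m]) :
    (fun ω => (y ω - Gy ω) - (Q ω - GQ ω) ⬝ᵥ θ) =ᵐ[P] ε := by
  have hQθ : Integrable (fun ω => Q ω ⬝ᵥ θ) P := by
    simp only [dotProduct]
    exact integrable_finsetSum _ fun i _ => (hQ.eval i).mul_const _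
  have hy_eq : y = (fun ω => Q ω ⬝ᵥ θ) + (h + ε) := by
    funext ω; simp only [Pi.add_apply, hmodel ω]; ring
  have hh_int : Integrable h P := by
    have : h = y - (fun ω => Q ω ⬝ᵥ θ) - ε := by rw [hy_eq]; abel
    exact this ▸ (hy.sub hQθ).sub hε
  have hy_cond : P[y|m] =ᵐ[P] P[fun ω => Q ω ⬝ᵥ θ|m] + (P[h|m] + P[ε|m]) := by
    rw [hy_eq]
    filter_upwards [condExp_add hQθ (hh_int.add hε) m, condExp_add hh_int hε m] with ω h₁ h₂
    rw [h₁, Pi.add_apply, h₂]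
    rfl
  filter_upwards [hGy, hy_cond, condExp_dotProduct_ae_eq hQ hGQ θ, hε_cond] with ω h₁ h₂ h₃ h₄
  simp only [Pi.add_apply, Pi.zero_apply, condExp_of_stronglyMeasurable hm hh hh_int] at h₂ h₄
  rw [sub_dotProduct, h₁, h₂, h₃, h₄, hmodel ω]
  ring

end ConditionalExpectation

theorem MeasureTheory.Integrable.kernel_mul_mul_prod {S T : Type*} [MeasurableSpace S]
    [MeasurableSpace T] {μ : Measure S} {ν : Measure T} [SFinite ν]
    {K : S → T → ℝ} (hK : Measurable (Function.uncurry K)) {C : ℝ} (hKC : ∀ s t, |K s t| ≤ C)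
    {a : S → ℝ} {e : T → ℝ} (ha : Integrable a μ) (he : Integrable e ν) :
    Integrable (fun q : S × T => K q.1 q.2 * (a q.1 * e q.2)) (μ.prod ν) :=
  (ha.mul_prod he).bdd_mul hK.aestronglyMeasurable (ae_of_all _ fun q => hKC q.1 q.2)

namespace ProbabilityTheory

variable {Ω S T : Type*} [MeasurableSpace Ω] [MeasurableSpace S] [MeasurableSpace T]
  {P : Measure Ω} [IsFiniteMeasure P] {U : Ω → S} {V : Ω → T}

theorem IndepFun.integrable_comp_prodMk (hUV : IndepFun U V P) (hU : Measurable U)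
    (hV : Measurable V) {F : S × T → ℝ} (hF : Measurable F)
    (hF_int : Integrable F ((P.map U).prod (P.map V))) :
    Integrable (fun ω => F (U ω, V ω)) P := by
  rw [← (indepFun_iff_map_prod_eq_prod_map_map hU.aemeasurable hV.aemeasurable).mp hUV] at hF_int
  exact (integrable_map_measure hF.aestronglyMeasurable (hU.prodMk hV).aemeasurable).mp hF_int

theorem IndepFun.integral_comp_prodMk (hUV : IndepFun U V P) (hU : Measurable U)
    (hV : Measurable V) {F : S × T → ℝ} (hF : Measurable F)
    (hF_int : Integrable F ((P.map U).prod (P.map V))) :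
    ∫ ω, F (U ω, V ω) ∂P = ∫ s, ∫ ω, F (s, V ω) ∂P ∂(P.map U) := by
  have hmap := (indepFun_iff_map_prod_eq_prod_map_map hU.aemeasurable hV.aemeasurable).mp hUV
  calc ∫ ω, F (U ω, V ω) ∂P = ∫ q, F q ∂(P.map fun ω => (U ω, V ω)) :=
        (integral_map (hU.prodMk hV).aemeasurable hF.aestronglyMeasurable).symm
    _ = ∫ s, ∫ t, F (s, t) ∂(P.map V) ∂(P.map U) := by rw [hmap, integral_prod F hF_int]
    _ = ∫ s, ∫ ω, F (s, V ω) ∂P ∂(P.map U) := by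
        congr 1; funext s
        exact integral_map hV.aemeasurable (hF.comp measurable_prodMk_left).aestronglyMeasurable

theorem IndepFun.integrable_kernel_mul_mul (hUV : IndepFun U V P) (hU : Measurable U)
    (hV : Measurable V) {K : S → T → ℝ} (hK : Measurable (Function.uncurry K)) {C : ℝ}
    (hKC : ∀ s t, |K s t| ≤ C) {a : S → ℝ} {e : T → ℝ} (ha : Measurable a) (he : Measurable e)
    (ha_int : Integrable (fun ω => a (U ω)) P) (he_int : Integrable (fun ω => e (V ω)) P) :
    Integrable (fun ω => K (U ω) (V ω) * (a (U ω) * e (V ω))) P :=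
  hUV.integrable_comp_prodMk hU hV (F := fun q => K q.1 q.2 * (a q.1 * e q.2)) (by fun_prop)
    (.kernel_mul_mul_prod hK hKC
      ((integrable_map_measure ha.aestronglyMeasurable hU.aemeasurable).mpr ha_int)
      ((integrable_map_measure he.aestronglyMeasurable hV.aemeasurable).mpr he_int))

theorem IndepFun.integral_kernel_mul_mul_eq_zero (hUV : IndepFun U V P) (hU : Measurable U)
    (hV : Measurable V) {K : S → T → ℝ} (hK : Measurable (Function.uncurry K)) {C : ℝ}
    (hKC : ∀ s t, |K s t| ≤ C) {a : S → ℝ} {e : T → ℝ} (ha : Measurable a) (he : Measurable e)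
    (ha_int : Integrable (fun ω => a (U ω)) P) (he_int : Integrable (fun ω => e (V ω)) P)
    (h_inner : ∀ s, ∫ ω, K s (V ω) * e (V ω) ∂P = 0) :
    ∫ ω, K (U ω) (V ω) * (a (U ω) * e (V ω)) ∂P = 0 := by
  rw [hUV.integral_comp_prodMk hU hV (F := fun q => K q.1 q.2 * (a q.1 * e q.2)) (by fun_prop)
    (.kernel_mul_mul_prod hK hKC
      ((integrable_map_measure ha.aestronglyMeasurable hU.aemeasurable).mpr ha_int)
      ((integrable_map_measure he.aestronglyMeasurable hV.aemeasurable).mpr he_int))]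
  refine integral_eq_zero_of_ae (ae_of_all _ fun s => ?_)
  simp only [mul_left_comm (K s _), integral_const_mul, h_inner, mul_zero, Pi.zero_apply]

end ProbabilityTheory

theorem Matrix.mulVec_eq_of_integral_mul_sub_dotProduct_eq_zero
    {Ω ι : Type*} [MeasurableSpace Ω] [Fintype ι] {P : Measure Ω}
    {K Y : Ω → ℝ} {A Q : Ω → ι → ℝ} {θ : ι → ℝ}
    (hY : ∀ a, Integrable (fun ω => K ω * (A ω a * Y ω)) P)
    (hQ : ∀ a b, Integrable (fun ω => K ω * (A ω a * Q ω b)) P)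
    (h : ∀ a, ∫ ω, K ω * (A ω a * (Y ω - Q ω ⬝ᵥ θ)) ∂P = 0) :
    (Matrix.of fun a b => ∫ ω, K ω * (A ω a * Q ω b) ∂P) *ᵥ θ =
      fun a => ∫ ω, K ω * (A ω a * Y ω) ∂P := by
  funext a
  have hsplit : (fun ω => K ω * (A ω a * (Y ω - Q ω ⬝ᵥ θ))) =
      fun ω => K ω * (A ω a * Y ω) - ∑ b, K ω * (A ω a * Q ω b) * θ b := by
    funext ω
    simp only [dotProduct, mul_sub, Finset.mul_sum, mul_assoc]
  have hQθ : ∀ b ∈ Finset.univ, Integrable (fun ω => K ω * (A ω a * Q ω b) * θ b) P :=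
    fun b _ => (hQ a b).mul_const _
  have h_a := h a
  rw [hsplit, integral_sub (hY a) (integrable_finsetSum _ hQθ), integral_finsetSum _ hQθ,
    sub_eq_zero] at h_a
  simp only [mulVec, dotProduct, of_apply, h_a, integral_mul_const]

theorem rsmd_foc_at_truth_general
    {Ω : Type*} [MeasurableSpace Ω] (P : Measure Ω) [IsProbabilityMeasure P]
    {p qX qz : ℕ}
    (μ : Measure (Fin qz → ℝ)) [IsFiniteMeasure μ]
    (k : (Fin qz → ℝ) → ℝ)
    (hk : ∀ u, (k u : ℂ) = ∫ t, Complex.exp (Complex.I * ((t ⬝ᵥ u : ℝ) : ℂ)) ∂μ)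
    (θ₀ : Fin p → ℝ) (f : (Fin qX → ℝ) → ℝ) (hfmeas : Measurable f)
    (y : Fin 2 → Ω → ℝ) (Pv : Fin 2 → Ω → Fin p → ℝ)
    (X : Fin 2 → Ω → Fin qX → ℝ) (Z : Fin 2 → Ω → Fin qz → ℝ)
    (ε : Fin 2 → Ω → ℝ)
    (hymeas : ∀ i, Measurable (y i)) (hPmeas : ∀ i, Measurable (Pv i))
    (hXmeas : ∀ i, Measurable (X i)) (hZmeas : ∀ i, Measurable (Z i))
    (hyL2 : ∀ i, MemLp (y i) 2 P) (hPL2 : ∀ i, MemLp (Pv i) 2 P)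
    (hεint : ∀ i, Integrable (ε i) P)
    (hmodel : ∀ i ω, y i ω = Pv i ω ⬝ᵥ θ₀ + f (X i ω) + ε i ω)
    (hεcond : ∀ i, P[ε i | MeasurableSpace.comap (fun ω => (X i ω, Z i ω)) inferInstance]
        =ᵐ[P] 0)
    (hindep : IndepFun (fun ω => (y 0 ω, Pv 0 ω, X 0 ω, Z 0 ω))
        (fun ω => (y 1 ω, Pv 1 ω, X 1 ω, Z 1 ω)) P)
    (gy : (Fin qX → ℝ) → ℝ) (gP : (Fin qX → ℝ) → Fin p → ℝ)
    (hgymeas : Measurable gy) (hgPmeas : Measurable gP)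
    (hgy : ∀ i, (fun ω => gy (X i ω))
        =ᵐ[P] P[y i | MeasurableSpace.comap (X i) inferInstance])
    (hgP : ∀ i, (fun ω => gP (X i ω))
        =ᵐ[P] P[Pv i | MeasurableSpace.comap (X i) inferInstance])
    (ytil : Fin 2 → Ω → ℝ) (Ptil : Fin 2 → Ω → Fin p → ℝ)
    (hytil : ∀ i ω, ytil i ω = y i ω - gy (X i ω))
    (hPtil : ∀ i ω, Ptil i ω = Pv i ω - gP (X i ω))
    (B : Matrix (Fin p) (Fin p) ℝ)
    (hB : B = Matrix.of fun a b => ∫ ω, k (Z 0 ω - Z 1 ω) * (Ptil 0 ω a * Ptil 1 ω b) ∂P) :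
    (∀ a : Fin p,
        ∫ ω, k (Z 0 ω - Z 1 ω) * (Ptil 0 ω a * (ytil 1 ω - Ptil 1 ω ⬝ᵥ θ₀)) ∂P = 0) ∧
    (IsUnit B.det →
      θ₀ = B⁻¹.mulVec fun a => ∫ ω, k (Z 0 ω - Z 1 ω) * (Ptil 0 ω a * ytil 1 ω) ∂P) := by
  obtain rfl : ytil = fun i ω => y i ω - gy (X i ω) := funext fun i => funext (hytil i)
  obtain rfl : Ptil = fun i ω => Pv i ω - gP (X i ω) := funext fun i => funext (hPtil i)
  subst hB
  have hkmeas := measurable_of_ofReal_eq_integral_cexp hk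
  have hkC := abs_le_of_ofReal_eq_integral_cexp hk
  have hXZ : Measurable fun ω => (X 1 ω, Z 1 ω) := (hXmeas 1).prodMk (hZmeas 1)
  have hresid : (fun ω => (y 1 ω - gy (X 1 ω)) - (Pv 1 ω - gP (X 1 ω)) ⬝ᵥ θ₀) =ᵐ[P] ε 1 :=
    residual_ae_eq_of_partiallyLinear (hXmeas 1).comap_le
      (hfmeas.comp (comap_measurable (X 1))).stronglyMeasurable (hmodel 1)
      ((hyL2 1).integrable one_le_two) ((hPL2 1).integrable one_le_two) (hεint 1)
      (condExp_ae_eq_zero_of_le (measurable_fst.comp (comap_measurable _)).comap_le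
        hXZ.comap_le (hεcond 1)) (hgy 1) (hgP 1)
  have h_inner : ∀ z, ∫ ω, k (z - Z 1 ω) *
      ((y 1 ω - gy (X 1 ω)) - (Pv 1 ω - gP (X 1 ω)) ⬝ᵥ θ₀) ∂P = 0 := fun z =>
    integral_mul_eq_zero_of_condExp_ae_eq_zero hXZ.comap_le
      (hkmeas.comp (measurable_const.sub
        (measurable_snd.comp (comap_measurable _)))).stronglyMeasurable
      (fun _ => hkC _) ((hεint 1).congr hresid.symm) ((condExp_congr_ae hresid).trans (hεcond 1))
  have hU : Measurable fun ω => (y 0 ω, Pv 0 ω, X 0 ω, Z 0 ω) := by fun_prop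
  have hV : Measurable fun ω => (y 1 ω, Pv 1 ω, X 1 ω, Z 1 ω) := by fun_prop
  have hK : Measurable (Function.uncurry fun w w' : ℝ × (Fin p → ℝ) × (Fin qX → ℝ) × (Fin qz → ℝ)
      => k (w.2.2.2 - w'.2.2.2)) :=
    hkmeas.comp (by fun_prop)
  have hPtil_int : ∀ i a, Integrable (fun ω => (Pv i ω - gP (X i ω)) a) P := fun i =>
    (((hPL2 i).integrable one_le_two).sub (integrable_condExp.congr (hgP i).symm)).eval
  have hfoc : ∀ a, ∫ ω, k (Z 0 ω - Z 1 ω) * ((Pv 0 ω - gP (X 0 ω)) a *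
      ((y 1 ω - gy (X 1 ω)) - (Pv 1 ω - gP (X 1 ω)) ⬝ᵥ θ₀)) ∂P = 0 := fun a =>
    hindep.integral_kernel_mul_mul_eq_zero hU hV hK (fun _ _ => hkC _)
      (a := fun w => (w.2.1 - gP w.2.2.1) a)
      (e := fun w => (w.1 - gy w.2.2.1) - (w.2.1 - gP w.2.2.1) ⬝ᵥ θ₀)
      (by fun_prop) (by fun_prop) (hPtil_int 0 a) ((hεint 1).congr hresid.symm)
      fun w => h_inner w.2.2.2
  refine ⟨hfoc, fun hdet => ?_⟩
  rw [← Matrix.mulVec_eq_of_integral_mul_sub_dotProduct_eq_zero _ _ hfoc,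
    mulVec_mulVec, nonsing_inv_mul _ hdet, one_mulVec]
  · exact fun a => hindep.integrable_kernel_mul_mul hU hV hK (fun _ _ => hkC _)
      (a := fun w => (w.2.1 - gP w.2.2.1) a) (e := fun w => w.1 - gy w.2.2.1)
      (by fun_prop) (by fun_prop) (hPtil_int 0 a)
      (((hyL2 1).integrable one_le_two).sub (integrable_condExp.congr (hgy 1).symm))
  · exact fun a b => hindep.integrable_kernel_mul_mul hU hV hK (fun _ _ => hkC _)
      (a := fun w => (w.2.1 - gP w.2.2.1) a) (e := fun w => (w.2.1 - gP w.2.2.1) b)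
      (by fun_prop) (by fun_prop) (hPtil_int 0 a) (hPtil_int 1 b)

/-- The (non-orthogonalized) R-SMD first-order condition holds at the truth:
`E[k(Z_j − Z_l) P̃_j (ỹ_l − ⟨P̃_l, θ₀⟩)] = 0`, and if `B := E[k(Z_j − Z_l) P̃_j P̃_lᵀ]`
is invertible then `θ₀ = B⁻¹ E[k(Z_j − Z_l) P̃_j ỹ_l]`. -/
theorem rsmd_foc_at_truth
    {Ω : Type*} [MeasurableSpace Ω] (P : Measure Ω) [IsProbabilityMeasure P]
    {p qX qz : ℕ}
    (μ : Measure (Fin qz → ℝ)) [IsFiniteMeasure μ]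
    (hμsymm : μ.map (fun t => -t) = μ)
    (k : (Fin qz → ℝ) → ℝ)
    (hk : ∀ u, (k u : ℂ) = ∫ t, Complex.exp (Complex.I * ((t ⬝ᵥ u : ℝ) : ℂ)) ∂μ)
    (θ₀ : Fin p → ℝ) (f : (Fin qX → ℝ) → ℝ) (hfmeas : Measurable f)
    (y : Fin 2 → Ω → ℝ) (Pv : Fin 2 → Ω → Fin p → ℝ)
    (X : Fin 2 → Ω → Fin qX → ℝ) (Z : Fin 2 → Ω → Fin qz → ℝ)
    (ε : Fin 2 → Ω → ℝ)
    (hymeas : ∀ i, Measurable (y i)) (hPmeas : ∀ i, Measurable (Pv i))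
    (hXmeas : ∀ i, Measurable (X i)) (hZmeas : ∀ i, Measurable (Z i))
    (hyL2 : ∀ i, MemLp (y i) 2 P) (hPL2 : ∀ i, MemLp (Pv i) 2 P)
    (hXL2 : ∀ i, MemLp (X i) 2 P) (hZL2 : ∀ i, MemLp (Z i) 2 P)
    (hεint : ∀ i, Integrable (ε i) P)
    (hmodel : ∀ i ω, y i ω = Pv i ω ⬝ᵥ θ₀ + f (X i ω) + ε i ω)
    (hεcond : ∀ i, P[ε i | MeasurableSpace.comap (fun ω => (X i ω, Z i ω)) inferInstance]
        =ᵐ[P] 0)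
    (hindep : IndepFun (fun ω => (y 0 ω, Pv 0 ω, X 0 ω, Z 0 ω))
        (fun ω => (y 1 ω, Pv 1 ω, X 1 ω, Z 1 ω)) P)
    (hident : IdentDistrib (fun ω => (y 0 ω, Pv 0 ω, X 0 ω, Z 0 ω))
        (fun ω => (y 1 ω, Pv 1 ω, X 1 ω, Z 1 ω)) P P)
    (gy : (Fin qX → ℝ) → ℝ) (gP : (Fin qX → ℝ) → Fin p → ℝ)
    (hgymeas : Measurable gy) (hgPmeas : Measurable gP)
    (hgy : ∀ i, (fun ω => gy (X i ω))
        =ᵐ[P] P[y i | MeasurableSpace.comap (X i) inferInstance])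
    (hgP : ∀ i, (fun ω => gP (X i ω))
        =ᵐ[P] P[Pv i | MeasurableSpace.comap (X i) inferInstance])
    (ytil : Fin 2 → Ω → ℝ) (Ptil : Fin 2 → Ω → Fin p → ℝ)
    (hytil : ∀ i ω, ytil i ω = y i ω - gy (X i ω))
    (hPtil : ∀ i ω, Ptil i ω = Pv i ω - gP (X i ω))
    (B : Matrix (Fin p) (Fin p) ℝ)
    (hB : B = Matrix.of fun a b => ∫ ω, k (Z 0 ω - Z 1 ω) * (Ptil 0 ω a * Ptil 1 ω b) ∂P) :
    (∀ a : Fin p,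
        ∫ ω, k (Z 0 ω - Z 1 ω) * (Ptil 0 ω a * (ytil 1 ω - Ptil 1 ω ⬝ᵥ θ₀)) ∂P = 0) ∧
    (IsUnit B.det →
      θ₀ = B⁻¹.mulVec fun a => ∫ ω, k (Z 0 ω - Z 1 ω) * (Ptil 0 ω a * ytil 1 ω) ∂P) :=
  rsmd_foc_at_truth_general P μ k hk θ₀ f hfmeas y Pv X Z ε hymeas hPmeas hXmeas hZmeas hyL2 hPL2
    hεint hmodel hεcond hindep gy gP hgymeas hgPmeas hgy hgP ytil Ptil hytil hPtil B hB
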